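/- (Sibling property) Let L be K45_nD, KD45_nD, or S5_nD, let P ⊆ 𝒫 be finite, k ≥ 2, and δ ∈ D^P_k(L). Let B, C be nonempty subsets of 𝒜 with C₁ = C∩B ≠ ∅ and C₂ = C∩(𝒜∖B) ≠ ∅. Then for every η ∈ R_B(δ) and every χ ∈ R_C(η), there is η₀ ∈ R_{C₁}(δ) such that η₀^↓ = χ (and χ ∈ R_C(η)) and R_D(η₀) = R_D(η) for every nonempty D ⊆ C₂. -/

import Mathlib

/-!
Common framework: multi-agent epistemic modal logic with distributed knowledge.
Agents are `Fin n`, atoms are natural numbers.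
-/

namespace DKLogic

/-- Formulas of the language `L_D`: atoms, negation, conjunction, disjunction and the
distributed-knowledge modality `D_B` for nonempty sets `B` of agents (together with the
constants `⊤`/`⊥`, which the paper uses as the empty conjunction/disjunction). -/
inductive Formula (n : ℕ) : Type
  | top : Formula n
  | bot : Formula n
  | atom : ℕ → Formula n
  | neg : Formula n → Formula n
  | and : Formula n → Formula n → Formula n
  | or : Formula n → Formula n → Formula n
  | D : {B : Finset (Fin n) // B.Nonempty} → Formula n → Formula n

namespace Formula

/-- Modal depth of a formula. -/
def depth {n : ℕ} : Formula n → ℕ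
  | top => 0
  | bot => 0
  | atom _ => 0
  | neg φ => depth φ
  | and φ ψ => max (depth φ) (depth ψ)
  | or φ ψ => max (depth φ) (depth ψ)
  | D _ φ => depth φ + 1

/-- The atoms occurring in a formula. -/
def atoms {n : ℕ} : Formula n → Finset ℕ
  | top => ∅
  | bot => ∅
  | atom q => {q}
  | neg φ => atoms φ
  | and φ ψ => atoms φ ∪ atoms ψ
  | or φ ψ => atoms φ ∪ atoms ψ
  | D _ φ => atoms φ

end Formula

/-- A Kripke model over world type `W` with `n` agents. -/
structure KModel (n : ℕ) (W : Type) where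
  R : Fin n → W → W → Prop
  V : W → Set ℕ

/-- The distributed accessibility relation `R_B = ⋂_{i ∈ B} R_i`. -/
def KModel.RB {n : ℕ} {W : Type} (M : KModel n W) (B : Finset (Fin n)) (s t : W) : Prop :=
  ∀ i ∈ B, M.R i s t

/-- Satisfaction. -/
def Sat {n : ℕ} {W : Type} (M : KModel n W) : W → Formula n → Prop
  | _, .top => True
  | _, .bot => False
  | s, .atom q => q ∈ M.V s
  | s, .neg φ => ¬ Sat M s φ
  | s, .and φ ψ => Sat M s φ ∧ Sat M s ψ
  | s, .or φ ψ => Sat M s φ ∨ Sat M s ψ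
  | s, .D B φ => ∀ t : W, M.RB B.1 s t → Sat M t φ

/-- Seriality of a relation. -/
def Serial {W : Type} (R : W → W → Prop) : Prop := ∀ x, ∃ y, R x y

/-- Euclideanness of a relation. -/
def Euclidean {W : Type} (R : W → W → Prop) : Prop := ∀ x y z, R x y → R x z → R y z

/-- The six modal systems. -/
inductive MSys : Type
  | K | D | T | K45 | KD45 | S5

/-- `L`-models: frame conditions on each accessibility relation for each system. -/
def IsModel {n : ℕ} {W : Type} : MSys → KModel n W → Prop
  | .K, _ => True
  | .D, M => ∀ i, Serial (M.R i)
  | .T, M => ∀ i, Reflexive (M.R i)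
  | .K45, M => ∀ i, Transitive (M.R i) ∧ Euclidean (M.R i)
  | .KD45, M => ∀ i, Serial (M.R i) ∧ Transitive (M.R i) ∧ Euclidean (M.R i)
  | .S5, M => ∀ i, Reflexive (M.R i) ∧ Transitive (M.R i) ∧ Euclidean (M.R i)

/-- Semantic consequence over `L`-models. -/
def Entails {n : ℕ} (L : MSys) (φ ψ : Formula n) : Prop :=
  ∀ (W : Type) (M : KModel n W), IsModel L M → ∀ s : W, Sat M s φ → Sat M s ψ

/-- Semantic equivalence over `L`-models. -/
def EquivL {n : ℕ} (L : MSys) (φ ψ : Formula n) : Prop :=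
  Entails L φ ψ ∧ Entails L ψ φ

/-- `L`-satisfiability. -/
def SatL {n : ℕ} (L : MSys) (φ : Formula n) : Prop :=
  ∃ (W : Type) (M : KModel n W) (s : W), IsModel L M ∧ Sat M s φ

/-- Collective `p`-bisimulation between two pointed models. -/
def CollPBisim {n : ℕ} {W W' : Type} (M : KModel n W) (s : W) (M' : KModel n W') (s' : W')
    (p : ℕ) : Prop :=
  ∃ ρ : W → W' → Prop, ρ s s' ∧
    ∀ u u', ρ u u' →
      ((∀ q : ℕ, q ≠ p → (q ∈ M.V u ↔ q ∈ M'.V u')) ∧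
       (∀ B : Finset (Fin n), B.Nonempty → ∀ v, M.RB B u v → ∃ v', M'.RB B u' v' ∧ ρ v v') ∧
       (∀ B : Finset (Fin n), B.Nonempty → ∀ v', M'.RB B u' v' → ∃ v, M.RB B u v ∧ ρ v v'))

/-- `ψ` is a result of forgetting `p` in `φ` in system `L`
(written `dforget_L(φ,p) ≡_L ψ` in the paper). -/
def IsForget {n : ℕ} (L : MSys) (φ : Formula n) (p : ℕ) (ψ : Formula n) : Prop :=
  ψ.atoms ⊆ φ.atoms.erase p ∧
  (∀ (W W' : Type) (M : KModel n W) (M' : KModel n W') (s : W) (s' : W'),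
      IsModel L M → IsModel L M' → Sat M s φ → CollPBisim M s M' s' p → Sat M' s' ψ) ∧
  (∀ (W' : Type) (M' : KModel n W') (s' : W'),
      IsModel L M' → Sat M' s' ψ →
      ∃ (W : Type) (M : KModel n W) (s : W), IsModel L M ∧ Sat M s φ ∧ CollPBisim M s M' s' p)

/-- `L` is closed under forgetting: `dforget_L(φ,p)` exists (as an `L`-satisfiable formula)
for every `L`-satisfiable `φ` and every atom `p`. -/
def ClosedUnderForgetting {n : ℕ} (L : MSys) : Prop :=
  ∀ (φ : Formula n) (p : ℕ), SatL L φ → ∃ ψ : Formula n, SatL L ψ ∧ IsForget L φ p ψ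

/-- `ψ` is a uniform interpolant of `φ` in `L` over `P \ {p}`. -/
def IsUI {n : ℕ} (L : MSys) (P : Finset ℕ) (p : ℕ) (φ ψ : Formula n) : Prop :=
  SatL L ψ ∧ ψ.atoms ⊆ P.erase p ∧
  ∀ χ : Formula n, p ∉ χ.atoms → (Entails L φ χ ↔ Entails L ψ χ)

/-- The uniform interpolation property for the system `L`. -/
def HasUIP {n : ℕ} (L : MSys) : Prop :=
  ∀ (P : Finset ℕ) (p : ℕ) (φ : Formula n),
    p ∈ P → φ.atoms ⊆ P → SatL L φ → ∃ ψ : Formula n, IsUI L P p φ ψ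

/-! ### Canonical formulas -/

/-- Big conjunction of a list of formulas (`⊤` for the empty list). -/
def bigAnd {n : ℕ} : List (Formula n) → Formula n
  | [] => .top
  | φ :: l => .and φ (bigAnd l)

/-- Big disjunction of a list of formulas (`⊥` for the empty list). -/
def bigOr {n : ℕ} : List (Formula n) → Formula n
  | [] => .bot
  | φ :: l => .or φ (bigOr l)

/-- An injective numerical code of formulas, used to fix a canonical ordering. -/
def fcode {n : ℕ} : Formula n → ℕ
  | .top => Nat.pair 0 0
  | .bot => Nat.pair 1 0
  | .atom q => Nat.pair 2 q
  | .neg φ => Nat.pair 3 (fcode φ)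
  | .and φ ψ => Nat.pair 4 (Nat.pair (fcode φ) (fcode ψ))
  | .or φ ψ => Nat.pair 5 (Nat.pair (fcode φ) (fcode ψ))
  | .D B φ => Nat.pair 6 (Nat.pair (B.1.sum fun i => 2 ^ (i : ℕ)) (fcode φ))

/-- Insert a formula into a strictly `fcode`-sorted list (dropping duplicates). -/
def insertF {n : ℕ} (φ : Formula n) : List (Formula n) → List (Formula n)
  | [] => [φ]
  | ψ :: l =>
      if fcode φ < fcode ψ then φ :: ψ :: l
      else if fcode φ = fcode ψ then ψ :: l
      else ψ :: insertF φ l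

/-- The canonical (sorted, duplicate-free) list representing the set of formulas in `l`. -/
def normList {n : ℕ} (l : List (Formula n)) : List (Formula n) := l.foldr insertF []

/-- The minterm of `P` that is positive exactly on `S`. -/
def minterm {n : ℕ} (P S : Finset ℕ) : Formula n :=
  bigAnd ((P.sort (· ≤ ·)).map fun q =>
    if q ∈ S then Formula.atom q else Formula.neg (Formula.atom q))

/-- The subset of `Fin n` whose characteristic bits are those of `m`. -/
def natToFinset (n m : ℕ) : Finset (Fin n) :=
  Finset.univ.filter fun i => m.testBit (i : ℕ)

/-- A canonical enumeration of all nonempty subsets of the agent set. -/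
def neSubsets (n : ℕ) : List {B : Finset (Fin n) // B.Nonempty} :=
  ((List.range (2 ^ n)).map (natToFinset n)).filterMap fun B =>
    if h : B.Nonempty then some ⟨B, h⟩ else none

/-- `∇_B Φ = D_B (⋁Φ) ∧ ⋀_{φ ∈ Φ} ¬ D_B ¬ φ`. -/
def nabla {n : ℕ} (B : {B : Finset (Fin n) // B.Nonempty}) (Φ : List (Formula n)) : Formula n :=
  Formula.and (Formula.D B (bigOr Φ))
    (bigAnd (Φ.map fun φ => Formula.neg (Formula.D B (Formula.neg φ))))

/-- Underlying data of a d-canonical formula: a set of (positive) atoms together with,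
for every set `B` of agents, a list of successor data. -/
inductive CData (n : ℕ) : Type
  | mk (S : Finset ℕ) (succ : Finset (Fin n) → List (CData n)) : CData n

/-- The positive-atom component. -/
def CData.S {n : ℕ} : CData n → Finset ℕ
  | mk S _ => S

/-- The `B`-successor data. -/
def CData.succ {n : ℕ} : CData n → Finset (Fin n) → List (CData n)
  | mk _ f => f

/-- The d-canonical formula of depth `k` over `P` determined by the data `d`:
`δ_0 ∧ ⋀_{B} ∇_B Φ_B`. -/
def toFormula {n : ℕ} (P : Finset ℕ) : ℕ → CData n → Formula n
  | 0, d => minterm P (d.S ∩ P)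
  | (k+1), d =>
      Formula.and (minterm P (d.S ∩ P))
        (bigAnd ((neSubsets n).map fun B =>
          nabla B (normList ((d.succ B.1).map fun c => toFormula P k c))))

/-- `D^P_k`: the set of d-canonical formulas of depth `k` over `P`. -/
def DP {n : ℕ} (P : Finset ℕ) (k : ℕ) : Set (Formula n) := Set.range (toFormula P k)

/-- `R_B(δ)` for `δ` the level-`k` canonical formula with data `d`:
the set of `B`-successor canonical formulas (of level `k - 1`). -/
def RBset {n : ℕ} (P : Finset ℕ) (k : ℕ) (d : CData n) (B : Finset (Fin n)) :
    Set (Formula n) :=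
  {φ | ∃ c ∈ d.succ B, φ = toFormula P (k - 1) c}

/-- One pruning step `δ ↦ δ^↓` on data (first argument: the level of the input). -/
def downD {n : ℕ} : ℕ → CData n → CData n
  | 0, d => d
  | 1, d => CData.mk d.S (fun _ => [])
  | (k+2), d => CData.mk d.S (fun B => (d.succ B).map fun c => downD (k+1) c)

/-- `l`-fold pruning `δ ↦ δ^{↓l}` on data (first argument: the level of the input). -/
def downIter {n : ℕ} : ℕ → ℕ → CData n → CData n
  | _, 0, d => d
  | k, (l+1), d => downIter (k-1) l (downD k d)

/-- Truncation `δ ↦ δ^{↑l}` on data (first argument: the level of the input). -/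
def upD {n : ℕ} : ℕ → ℕ → CData n → CData n
  | _, 0, d => CData.mk d.S (fun _ => [])
  | 0, (_+1), d => d
  | (k+1), (l+1), d => CData.mk d.S (fun B => (d.succ B).map fun c => upD k l c)

/-- The canonical formula `δ` of level `k` with data `d`. -/
def cf {n : ℕ} (P : Finset ℕ) (k : ℕ) (d : CData n) : Formula n := toFormula P k d

/-- `δ^{↓l}` (a canonical formula of level `k - l`). -/
def cfDown {n : ℕ} (P : Finset ℕ) (k l : ℕ) (d : CData n) : Formula n :=
  toFormula P (k - l) (downIter k l d)

/-- `δ^{↑l}` (a canonical formula of level `min k l`). -/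
def cfUp {n : ℕ} (P : Finset ℕ) (k l : ℕ) (d : CData n) : Formula n :=
  toFormula P (min k l) (upD k l d)

/-- Literal elimination: `φ^p` replaces every occurrence of `¬p` by `⊤` and subsequently
every remaining occurrence of `p` by `⊤`. -/
def elim {n : ℕ} (p : ℕ) : Formula n → Formula n
  | .top => .top
  | .bot => .bot
  | .atom q => if q = p then .top else .atom q
  | .neg (.atom q) => if q = p then .top else .neg (.atom q)
  | .neg φ => .neg (elim p φ)
  | .and φ ψ => .and (elim p φ) (elim p ψ)
  | .or φ ψ => .or (elim p φ) (elim p ψ)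
  | .D B φ => .D B (elim p φ)

/-!
Canonical formulas of a fixed level are mutually exclusive, so at most one of them holds at any
world, and the `R_D`-component of a canonical formula true at `s` is exactly the set of canonical
formulas of the level below that hold at some `R_D`-successor of `s`.

Take a K45 model of `δ` at `s`, a `B`-successor `t` of `s` satisfying `η` and a `C`-successor `u`
of `t` satisfying `χ`. By transitivity `u` is a `C ∩ B`-successor of `s`, so some
`η₀ ∈ R_{C∩B}(δ)` holds at `u`; since `η₀` entails `η₀^↓`, both `η₀^↓` and `χ` hold at `u` and
therefore coincide. For `D ⊆ C`, transitivity and Euclideanness give `R_D(t) = R_D(u)`, so the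
`D`-components of `η` (true at `t`) and `η₀` (true at `u`) agree.
-/

section Encoding

variable {n : ℕ}

theorem testBit_sum_two_pow (S : Finset ℕ) (j : ℕ) : (∑ i ∈ S, 2 ^ i).testBit j ↔ j ∈ S := by
  rw [← Nat.mem_bitIndices, ← List.mem_toFinset, Finset.toFinset_bitIndices_sum_two_pow]

theorem sum_two_pow_val (B : Finset (Fin n)) :
    ∑ i ∈ B, 2 ^ (i : ℕ) = ∑ j ∈ B.map Fin.valEmbedding, 2 ^ j := by
  simp

theorem natToFinset_sum_two_pow (B : Finset (Fin n)) :
    natToFinset n (∑ i ∈ B, 2 ^ (i : ℕ)) = B := by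
  ext i
  rw [natToFinset, Finset.mem_filter, sum_two_pow_val, testBit_sum_two_pow]
  simp [Fin.val_inj]

theorem sum_two_pow_injective :
    Function.Injective fun B : Finset (Fin n) => ∑ i ∈ B, 2 ^ (i : ℕ) :=
  Function.LeftInverse.injective natToFinset_sum_two_pow

theorem mem_neSubsets (B : {B : Finset (Fin n) // B.Nonempty}) : B ∈ neSubsets n := by
  refine List.mem_filterMap.2 ⟨B.1, List.mem_map.2 ⟨∑ i ∈ B.1, 2 ^ (i : ℕ), ?_,
    natToFinset_sum_two_pow B.1⟩, dif_pos B.2⟩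
  rw [List.mem_range, sum_two_pow_val]
  exact Nat.geomSum_lt le_rfl (by simp)

theorem fcode_injective : Function.Injective (fcode (n := n)) := by
  intro φ
  induction φ with
  | top | bot => intro ψ h; cases ψ <;> simp_all [fcode, Nat.pair_eq_pair]
  | atom => intro ψ h; cases ψ <;> simp_all [fcode, Nat.pair_eq_pair]
  | neg φ ih => intro ψ h; cases ψ <;> simp [fcode, Nat.pair_eq_pair] at h ⊢; exact ih h
  | and φ₁ φ₂ ih₁ ih₂ | or φ₁ φ₂ ih₁ ih₂ =>
    intro ψ h; cases ψ <;> simp [fcode, Nat.pair_eq_pair] at h ⊢; exact ⟨ih₁ h.1, ih₂ h.2⟩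
  | D B φ ih =>
    intro ψ h
    cases ψ with
    | D C ψ =>
      simp only [fcode, Nat.pair_eq_pair, true_and] at h
      obtain ⟨hBC, hφψ⟩ := h
      rw [ih hφψ, Subtype.ext (sum_two_pow_injective hBC)]
    | _ => simp [fcode, Nat.pair_eq_pair] at h

end Encoding

section NormList

variable {n : ℕ}

theorem mem_insertF {φ ψ : Formula n} {l : List (Formula n)} :
    ψ ∈ insertF φ l ↔ ψ = φ ∨ ψ ∈ l := by
  induction l with
  | nil => simp [insertF]
  | cons χ l ih =>
    rw [insertF]
    split_ifs with hlt heq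
    · simp
    · rw [fcode_injective heq]
      simp
    · simp only [List.mem_cons, ih]
      tauto

theorem mem_normList {φ : Formula n} {l : List (Formula n)} : φ ∈ normList l ↔ φ ∈ l := by
  induction l with
  | nil => simp [normList]
  | cons ψ l ih => rw [normList, List.foldr_cons, mem_insertF, ← normList, ih, List.mem_cons]

theorem pairwise_insertF {φ : Formula n} {l : List (Formula n)}
    (h : l.Pairwise fun a b => fcode a < fcode b) :
    (insertF φ l).Pairwise fun a b => fcode a < fcode b := by
  induction l with
  | nil => simp [insertF]
  | cons χ l ih =>
    rw [insertF]
    split_ifs with hlt heq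
    · refine List.pairwise_cons.2 ⟨fun x hx => ?_, h⟩
      rcases List.mem_cons.1 hx with rfl | hx
      exacts [hlt, hlt.trans (List.rel_of_pairwise_cons h hx)]
    · exact h
    · refine List.pairwise_cons.2 ⟨fun x hx => ?_, ih h.of_cons⟩
      rcases mem_insertF.1 hx with rfl | hx
      exacts [by omega, List.rel_of_pairwise_cons h hx]

theorem pairwise_normList (l : List (Formula n)) :
    (normList l).Pairwise fun a b => fcode a < fcode b := by
  induction l with
  | nil => simp [normList]
  | cons ψ l ih => exact pairwise_insertF ih

theorem normList_eq_of_mem_iff {l₁ l₂ : List (Formula n)} (h : ∀ φ, φ ∈ l₁ ↔ φ ∈ l₂) :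
    normList l₁ = normList l₂ := by
  have : Std.Antisymm fun a b : Formula n => fcode a < fcode b :=
    ⟨fun _ _ hab hba => absurd (hab.trans hba) (lt_irrefl _)⟩
  have : Std.Irrefl fun a b : Formula n => fcode a < fcode b := ⟨fun _ => lt_irrefl _⟩
  exact (pairwise_normList l₁).eq_of_mem_iff (pairwise_normList l₂) (by simp [mem_normList, h])

end NormList

section Semantics

variable {n : ℕ} {W : Type} {M : KModel n W} {s : W}

theorem sat_bigAnd {l : List (Formula n)} : Sat M s (bigAnd l) ↔ ∀ φ ∈ l, Sat M s φ := by
  induction l with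
  | nil => simp [bigAnd, Sat]
  | cons φ l ih => simp [bigAnd, Sat, ih]

theorem sat_bigOr {l : List (Formula n)} : Sat M s (bigOr l) ↔ ∃ φ ∈ l, Sat M s φ := by
  induction l with
  | nil => simp [bigOr, Sat]
  | cons φ l ih => simp [bigOr, Sat, ih]

theorem sat_nabla_normList {B : {B : Finset (Fin n) // B.Nonempty}} {l : List (Formula n)} :
    Sat M s (nabla B (normList l)) ↔
      (∀ t, M.RB B.1 s t → ∃ φ ∈ l, Sat M t φ) ∧ ∀ φ ∈ l, ∃ t, M.RB B.1 s t ∧ Sat M t φ := by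
  simp only [nabla, Sat, sat_bigAnd, sat_bigOr, List.forall_mem_map, mem_normList]
  simp

theorem sat_minterm {P S : Finset ℕ} :
    Sat M s (minterm P S) ↔ ∀ q ∈ P, (q ∈ S ↔ q ∈ M.V s) := by
  simp only [minterm, sat_bigAnd, List.forall_mem_map, Finset.mem_sort]
  refine forall₂_congr fun q _ => ?_
  split_ifs with hq <;> simp [Sat, hq]

theorem minterm_congr {P S₁ S₂ : Finset ℕ} (h : ∀ q ∈ P, (q ∈ S₁ ↔ q ∈ S₂)) :
    minterm (n := n) P S₁ = minterm P S₂ :=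
  congrArg bigAnd <| List.map_congr_left fun q hq =>
    if_congr (h q ((Finset.mem_sort _).1 hq)) rfl rfl

theorem sat_toFormula_succ {P : Finset ℕ} {k : ℕ} {d : CData n} :
    Sat M s (toFormula P (k + 1) d) ↔
      Sat M s (minterm P (d.S ∩ P)) ∧
        ∀ B : {B : Finset (Fin n) // B.Nonempty},
          Sat M s (nabla B (normList ((d.succ B.1).map (toFormula P k)))) := by
  simp only [toFormula, Sat, sat_bigAnd, List.forall_mem_map]
  exact and_congr_right fun _ => ⟨fun h B => h B (mem_neSubsets B), fun h B _ => h B⟩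

end Semantics

section Canonical

variable {n : ℕ} {W : Type} {M : KModel n W} {P : Finset ℕ}

theorem mem_map_toFormula_iff {k : ℕ}
    (huniq : ∀ t (x y : CData n), Sat M t (toFormula P k x) → Sat M t (toFormula P k y) →
      toFormula P k x = toFormula P k y)
    {s : W} {d : CData n} (hs : Sat M s (toFormula P (k + 1) d))
    (D : {D : Finset (Fin n) // D.Nonempty}) (x : CData n) :
    toFormula P k x ∈ (d.succ D.1).map (toFormula P k) ↔
      ∃ t, M.RB D.1 s t ∧ Sat M t (toFormula P k x) := by
  obtain ⟨hcover, hwitness⟩ := sat_nabla_normList.1 (sat_toFormula_succ.1 hs |>.2 D)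
  refine ⟨hwitness _, fun ⟨t, hst, hx⟩ => ?_⟩
  obtain ⟨φ, hφ, hφt⟩ := hcover t hst
  obtain ⟨y, -, rfl⟩ := List.mem_map.1 hφ
  rwa [huniq t x y hx hφt]

theorem map_toFormula_succ_eq {k : ℕ}
    (huniq : ∀ t (x y : CData n), Sat M t (toFormula P k x) → Sat M t (toFormula P k y) →
      toFormula P k x = toFormula P k y)
    {s s' : W} {d e : CData n} (hd : Sat M s (toFormula P (k + 1) d))
    (he : Sat M s' (toFormula P (k + 1) e)) (D : {D : Finset (Fin n) // D.Nonempty})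
    (hss' : ∀ v, M.RB D.1 s v ↔ M.RB D.1 s' v) (φ : Formula n) :
    φ ∈ (d.succ D.1).map (toFormula P k) ↔ φ ∈ (e.succ D.1).map (toFormula P k) := by
  constructor <;> intro hφ
  · obtain ⟨x, -, rfl⟩ := List.mem_map.1 hφ
    rw [mem_map_toFormula_iff huniq hd] at hφ
    simpa only [mem_map_toFormula_iff huniq he, ← hss'] using hφ
  · obtain ⟨x, -, rfl⟩ := List.mem_map.1 hφ
    rw [mem_map_toFormula_iff huniq he] at hφ
    simpa only [mem_map_toFormula_iff huniq hd, hss'] using hφ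

theorem toFormula_eq_of_sat (k : ℕ) {s : W} {d e : CData n}
    (hd : Sat M s (toFormula P k d)) (he : Sat M s (toFormula P k e)) :
    toFormula P k d = toFormula P k e := by
  induction k generalizing s d e with
  | zero =>
    rw [toFormula, sat_minterm] at hd he
    exact minterm_congr fun q hq => (hd q hq).trans (he q hq).symm
  | succ k ih =>
    have hd₀ := sat_minterm.1 (sat_toFormula_succ.1 hd).1
    have he₀ := sat_minterm.1 (sat_toFormula_succ.1 he).1
    rw [toFormula, toFormula, minterm_congr fun q hq => (hd₀ q hq).trans (he₀ q hq).symm]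
    congr 2
    refine List.map_congr_left fun D _ => congrArg (nabla D) (normList_eq_of_mem_iff ?_)
    exact map_toFormula_succ_eq (fun _ _ _ => ih) hd he D fun _ => Iff.rfl

theorem sat_toFormula_downD (k : ℕ) {s : W} {d : CData n}
    (h : Sat M s (toFormula P (k + 1) d)) : Sat M s (toFormula P k (downD (k + 1) d)) := by
  induction k generalizing s d with
  | zero => exact (sat_toFormula_succ.1 h).1
  | succ k ih =>
    obtain ⟨h₀, hD⟩ := sat_toFormula_succ.1 h
    refine sat_toFormula_succ.2 ⟨h₀, fun D => ?_⟩
    obtain ⟨hcover, hwitness⟩ := sat_nabla_normList.1 (hD D)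
    simp only [downD, CData.succ, List.map_map]
    refine sat_nabla_normList.2 ⟨fun t hst => ?_, fun φ hφ => ?_⟩
    · obtain ⟨φ, hφ, hφt⟩ := hcover t hst
      obtain ⟨x, hx, rfl⟩ := List.mem_map.1 hφ
      exact ⟨_, List.mem_map_of_mem hx, ih hφt⟩
    · obtain ⟨x, hx, rfl⟩ := List.mem_map.1 hφ
      obtain ⟨t, hst, hxt⟩ := hwitness _ (List.mem_map_of_mem hx)
      exact ⟨t, hst, ih hxt⟩

end Canonical

section K45

variable {n : ℕ} {W : Type} {M : KModel n W}

theorem isModel_K45 {L : MSys} (hL : L = MSys.K45 ∨ L = MSys.KD45 ∨ L = MSys.S5)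
    (hM : IsModel L M) : IsModel MSys.K45 M := by
  rcases hL with rfl | rfl | rfl
  exacts [hM, fun i => (hM i).2, fun i => (hM i).2]

theorem KModel.RB_trans (hM : IsModel MSys.K45 M) {B : Finset (Fin n)} {s t u : W}
    (hst : M.RB B s t) (htu : M.RB B t u) : M.RB B s u :=
  fun i hi => (hM i).1 (hst i hi) (htu i hi)

theorem KModel.RB_iff_of_RB (hM : IsModel MSys.K45 M) {D : Finset (Fin n)} {t u : W}
    (htu : M.RB D t u) (v : W) : M.RB D t v ↔ M.RB D u v :=
  ⟨fun htv i hi => (hM i).2 t u v (htu i hi) (htv i hi), M.RB_trans hM htu⟩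

end K45

theorem sibling_property_general {n : ℕ} (L : MSys)
    (hL : L = MSys.K45 ∨ L = MSys.KD45 ∨ L = MSys.S5)
    (P : Finset ℕ) (k : ℕ) (hk : 2 ≤ k) (d : CData n) (hsat : SatL L (cf P k d))
    (B C : Finset (Fin n)) (hB : B.Nonempty) (hC : C.Nonempty)
    (hC1 : (C ∩ B).Nonempty)
    (c : CData n) (hc : c ∈ d.succ B)
    (c2 : CData n) (hc2 : c2 ∈ c.succ C) :
    ∃ c0 ∈ d.succ (C ∩ B),
      -- η₀^↓ = χ (which lies in R_C(η))
      cfDown P (k - 1) 1 c0 = toFormula P (k - 2) c2 ∧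
      -- R_D(η₀) = R_D(η) for every nonempty D ⊆ C₂
      ∀ D : Finset (Fin n), D.Nonempty → D ⊆ C ∩ Bᶜ →
        {φ : Formula n | ∃ x ∈ c0.succ D, φ = toFormula P (k - 2) x} =
        {φ : Formula n | ∃ x ∈ c.succ D, φ = toFormula P (k - 2) x} := by
  obtain ⟨m, rfl⟩ : ∃ m, k = m + 2 := ⟨k - 2, by omega⟩
  obtain ⟨W, M, s, hM, hs⟩ := hsat
  replace hM := isModel_K45 hL hM
  have hδ := sat_toFormula_succ.1 hs
  obtain ⟨t, hst, hη⟩ := (sat_nabla_normList.1 (hδ.2 ⟨B, hB⟩)).2 _ (List.mem_map_of_mem hc)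
  obtain ⟨u, htu, hχ⟩ :=
    (sat_nabla_normList.1 ((sat_toFormula_succ.1 hη).2 ⟨C, hC⟩)).2 _ (List.mem_map_of_mem hc2)
  have hsu : M.RB (C ∩ B) s u :=
    M.RB_trans hM (fun i hi => hst i (Finset.mem_inter.1 hi).2)
      (fun i hi => htu i (Finset.mem_inter.1 hi).1)
  obtain ⟨φ, hφ, hη₀⟩ := (sat_nabla_normList.1 (hδ.2 ⟨C ∩ B, hC1⟩)).1 u hsu
  obtain ⟨c0, hc0, rfl⟩ := List.mem_map.1 hφ
  refine ⟨c0, hc0, toFormula_eq_of_sat m (sat_toFormula_downD m hη₀) hχ, fun D hD hDC => ?_⟩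
  have htu_D : M.RB D t u := fun i hi => htu i (Finset.mem_inter.1 (hDC hi)).1
  ext φ
  simp only [Set.mem_ofPred_eq, Nat.add_sub_cancel]
  simpa only [List.mem_map, eq_comm] using
    map_toFormula_succ_eq (fun _ _ _ => toFormula_eq_of_sat m) hη₀ hη ⟨D, hD⟩
      (fun v => (M.RB_iff_of_RB hM htu_D v).symm) φ

/-- the sibling property. -/
theorem sibling_property {n : ℕ} (L : MSys)
    (hL : L = MSys.K45 ∨ L = MSys.KD45 ∨ L = MSys.S5)
    (P : Finset ℕ) (k : ℕ) (hk : 2 ≤ k) (d : CData n) (hsat : SatL L (cf P k d))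
    (B C : Finset (Fin n)) (hB : B.Nonempty) (hC : C.Nonempty)
    (hC1 : (C ∩ B).Nonempty) (hC2 : (C ∩ Bᶜ).Nonempty)
    (c : CData n) (hc : c ∈ d.succ B)
    (c2 : CData n) (hc2 : c2 ∈ c.succ C) :
    ∃ c0 ∈ d.succ (C ∩ B),
      -- η₀^↓ = χ (which lies in R_C(η))
      cfDown P (k - 1) 1 c0 = toFormula P (k - 2) c2 ∧
      -- R_D(η₀) = R_D(η) for every nonempty D ⊆ C₂
      ∀ D : Finset (Fin n), D.Nonempty → D ⊆ C ∩ Bᶜ →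
        {φ : Formula n | ∃ x ∈ c0.succ D, φ = toFormula P (k - 2) x} =
        {φ : Formula n | ∃ x ∈ c.succ D, φ = toFormula P (k - 2) x} :=
  sibling_property_general L hL P k hk d hsat B C hB hC hC1 c hc c2 hc2

end DKLogic
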